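/- arXiv:2011.02972 — 2 statements merged into one kernel-verified Lean document; each statement's English description precedes it below -/
import Mathlib

section
/- Let A be an invertible real n×n matrix and γ(t) = A e^{−2t} + (1 − e^{−2t})·A(√(AᵀA))⁻¹. Then for all t ≥ 0: γ(t)ᵀγ(t) = (e^{−2t}√(AᵀA) + (1 − e^{−2t})I)², the positive definite square root of γ(t)ᵀγ(t) equals e^{−2t}√(AᵀA) + (1 − e^{−2t})I, and (γ(t)ᵀ)⁻¹·√(γ(t)ᵀγ(t)) = (Aᵀ)⁻¹·√(AᵀA). -/
open Matrix

open scoped Classical in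
/-- The unique positive semidefinite square root of a positive semidefinite real matrix
(junk value `0` on matrices that are not positive semidefinite). -/
noncomputable def psdSqrt {n : ℕ} (X : Matrix (Fin n) (Fin n) ℝ) : Matrix (Fin n) (Fin n) ℝ :=
  if h : X.PosSemidef then
    (h.1.eigenvectorUnitary : Matrix (Fin n) (Fin n) ℝ) *
      diagonal ((↑) ∘ (√·) ∘ h.1.eigenvalues) * (star h.1.eigenvectorUnitary : Matrix (Fin n) (Fin n) ℝ)
  else 0

/-!
The matrix `U = A (√(AᵀA))⁻¹` is the orthogonal polar factor of `A`, and the curve factors as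
`γ(t) = U B(t)` with `B(t) = e^{−2t} √(AᵀA) + (1 − e^{−2t}) I`, which is positive definite for
`t ≥ 0`. Hence `γᵀγ = B²`, `√(γᵀγ) = B`, and `(γᵀ)⁻¹ B = U`; the same computation at `t = 0`,
where `γ(0) = A = U √(AᵀA)`, gives `(Aᵀ)⁻¹ √(AᵀA) = U`.
-/

section Orthogonal

variable {m R : Type*} [Fintype m] [DecidableEq m] [CommRing R]

theorem transpose_mul_self_eq_one_of_mul_self_eq {A S : Matrix m m R} (hS : S.IsSymm)
    (hSdet : IsUnit S.det) (hSS : S * S = Aᵀ * A) : (A * S⁻¹)ᵀ * (A * S⁻¹) = 1 := by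
  rw [transpose_mul, transpose_nonsing_inv, hS.eq]
  calc S⁻¹ * Aᵀ * (A * S⁻¹) = S⁻¹ * (S * S) * S⁻¹ := by simp only [hSS, mul_assoc]
    _ = 1 := by rw [nonsing_inv_mul_cancel_left _ _ hSdet, mul_nonsing_inv _ hSdet]

theorem transpose_mul_self_orthogonal_mul_eq_sq {U P : Matrix m m R} (hU : Uᵀ * U = 1)
    (hP : P.IsSymm) : (U * P)ᵀ * (U * P) = P ^ 2 := by
  rw [transpose_mul, hP.eq, sq, mul_assoc, ← mul_assoc Uᵀ, hU, one_mul]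

theorem transpose_orthogonal_mul_inv_mul_eq {U P : Matrix m m R} (hU : Uᵀ * U = 1)
    (hP : P.IsSymm) (hPdet : IsUnit P.det) : ((U * P)ᵀ)⁻¹ * P = U := by
  have hUdet : IsUnit U.det := isUnit_det_of_left_inverse hU
  have hUP : (U * P)ᵀ * U = P := by rw [transpose_mul, hP.eq, mul_assoc, hU, mul_one]
  have hdet : IsUnit ((U * P)ᵀ).det := by
    rw [det_transpose, det_mul]; exact hUdet.mul hPdet
  calc ((U * P)ᵀ)⁻¹ * P = ((U * P)ᵀ)⁻¹ * ((U * P)ᵀ * U) := by rw [hUP]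
    _ = U := nonsing_inv_mul_cancel_left _ _ hdet

end Orthogonal

section PsdSqrt

variable {n : ℕ} {X : Matrix (Fin n) (Fin n) ℝ}

theorem psdSqrt_eq_cfc (hX : X.PosSemidef) : psdSqrt X = cfc Real.sqrt X := by
  rw [psdSqrt, dif_pos hX, hX.1.cfc_eq, IsHermitian.cfc, Unitary.conjStarAlgAut_apply]
  rfl

theorem posSemidef_psdSqrt (hX : X.PosSemidef) : (psdSqrt X).PosSemidef := by
  rw [psdSqrt, dif_pos hX]
  have hD : (diagonal ((↑) ∘ (√·) ∘ hX.1.eigenvalues) : Matrix (Fin n) (Fin n) ℝ).PosSemidef :=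
    PosSemidef.diagonal fun _ => Real.sqrt_nonneg _
  simpa [star_eq_conjTranspose] using
    hD.mul_mul_conjTranspose_same (hX.1.eigenvectorUnitary : Matrix (Fin n) (Fin n) ℝ)

theorem psdSqrt_mul_self (hX : X.PosSemidef) : psdSqrt X * psdSqrt X = X := by
  have : IsSelfAdjoint X := hX.1
  rw [psdSqrt_eq_cfc hX, ← cfc_mul Real.sqrt Real.sqrt X]
  conv_rhs => rw [← cfc_id' ℝ X]
  exact cfc_congr fun x hx =>
    Real.mul_self_sqrt ((posSemidef_iff_isHermitian_and_spectrum_nonneg.mp hX).2 hx)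

theorem psdSqrt_sq (hX : X.PosSemidef) : psdSqrt (X ^ 2) = X := by
  have : IsSelfAdjoint X := hX.1
  rw [psdSqrt_eq_cfc (hX.pow 2), ← cfc_pow_id (R := ℝ) X 2, ← cfc_comp Real.sqrt (· ^ 2) X]
  conv_rhs => rw [← cfc_id' ℝ X]
  exact cfc_congr fun x hx =>
    Real.sqrt_sq ((posSemidef_iff_isHermitian_and_spectrum_nonneg.mp hX).2 hx)

theorem posDef_psdSqrt (hX : X.PosDef) : (psdSqrt X).PosDef := by
  refine (posSemidef_psdSqrt hX.posSemidef).posDef_iff_isUnit.mpr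
    (isUnit_of_mul_isUnit_left (y := psdSqrt X) ?_)
  rw [psdSqrt_mul_self hX.posSemidef]
  exact hX.isUnit

end PsdSqrt

/-- Let A be an invertible real n×n matrix and
γ(t) = A e^{−2t} + (1 − e^{−2t})·A(√(AᵀA))⁻¹.  Then for all t ≥ 0:
γ(t)ᵀγ(t) = (e^{−2t}√(AᵀA) + (1 − e^{−2t})I)², the positive definite square root of γ(t)ᵀγ(t)
equals e^{−2t}√(AᵀA) + (1 − e^{−2t})I, and (γ(t)ᵀ)⁻¹·√(γ(t)ᵀγ(t)) = (Aᵀ)⁻¹·√(AᵀA). -/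
theorem gradient_flow_line_identities {n : ℕ} (A : Matrix (Fin n) (Fin n) ℝ)
    (hA : IsUnit A.det) :
    letI γ : ℝ → Matrix (Fin n) (Fin n) ℝ := fun t =>
      Real.exp (-2 * t) • A + (1 - Real.exp (-2 * t)) • (A * (psdSqrt (Aᵀ * A))⁻¹)
    ∀ t : ℝ, 0 ≤ t →
      (γ t)ᵀ * γ t =
        (Real.exp (-2 * t) • psdSqrt (Aᵀ * A) + (1 - Real.exp (-2 * t)) • (1 : Matrix (Fin n) (Fin n) ℝ)) ^ 2 ∧
      psdSqrt ((γ t)ᵀ * γ t) =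
        Real.exp (-2 * t) • psdSqrt (Aᵀ * A) + (1 - Real.exp (-2 * t)) • (1 : Matrix (Fin n) (Fin n) ℝ) ∧
      ((γ t)ᵀ)⁻¹ * psdSqrt ((γ t)ᵀ * γ t) = (Aᵀ)⁻¹ * psdSqrt (Aᵀ * A) := by
  intro t ht
  beta_reduce
  set S := psdSqrt (Aᵀ * A)
  set e := Real.exp (-2 * t)
  set B := e • S + (1 - e) • (1 : Matrix (Fin n) (Fin n) ℝ)
  set U := A * S⁻¹
  have hAA : (Aᵀ * A).PosDef := by
    simpa using PosDef.conjTranspose_mul_self A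
      (mulVec_injective_of_isUnit ((isUnit_iff_isUnit_det A).mpr hA))
  have hS : S.PosDef := posDef_psdSqrt hAA
  have hSsymm : S.IsSymm := by simpa using hS.1
  have hSdet : IsUnit S.det := hS.isUnit.map detMonoidHom
  have hU : Uᵀ * U = 1 :=
    transpose_mul_self_eq_one_of_mul_self_eq hSsymm hSdet (psdSqrt_mul_self hAA.posSemidef)
  have hUS : U * S = A := nonsing_inv_mul_cancel_right _ _ hSdet
  have he : e ≤ 1 := Real.exp_le_one_iff.mpr (by linarith)
  have hB : B.PosDef :=
    (hS.smul (Real.exp_pos _)).add_posSemidef (PosSemidef.one.smul (sub_nonneg.mpr he))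
  have hBsymm : B.IsSymm := by simpa using hB.1
  have hγ : e • A + (1 - e) • U = U * B := by
    rw [mul_add, mul_smul_comm, mul_smul_comm, hUS, mul_one]
  have hγγ : (U * B)ᵀ * (U * B) = B ^ 2 := transpose_mul_self_orthogonal_mul_eq_sq hU hBsymm
  rw [hγ, hγγ, psdSqrt_sq hB.posSemidef]
  refine ⟨rfl, rfl, ?_⟩
  rw [transpose_orthogonal_mul_inv_mul_eq hU hBsymm (hB.isUnit.map detMonoidHom)]
  simpa only [hUS] using (transpose_orthogonal_mul_inv_mul_eq hU hSsymm hSdet).symm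
end

section
/- The map H : GL(n,ℝ) × [0,1] → M(n,ℝ) defined by H(A,t) = (1−t)A + t·A(√(AᵀA))⁻¹ is a strong deformation retraction of GL(n,ℝ) onto O(n,ℝ): for every A ∈ GL(n,ℝ) and t ∈ [0,1] the matrix H(A,t) is invertible, H is continuous, H(A,0) = A, H(A,1) = A(√(AᵀA))⁻¹ ∈ O(n,ℝ), and H(B,t) = B for all B ∈ O(n,ℝ) and all t ∈ [0,1]. -/
open Matrix

/-!
For invertible `A`, `S = √(AᵀA)` is positive definite with `S² = AᵀA`, so `A S⁻¹` is orthogonal,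
and `H(A,t) = A ((1-t) I + t S⁻¹)` is `A` times a convex combination of the positive definite
matrices `I` and `S⁻¹`, hence invertible. The square root is continuous on positive semidefinite
matrices because it is the functional-calculus square root of the C⋆-algebra of matrices with the
operator norm, which induces the usual topology.
-/

open scoped MatrixOrder

namespace Matrix

theorem PosDef.one_sub_smul_add_smul {m : Type*} {A B : Matrix m m ℝ} (hA : A.PosDef)
    (hB : B.PosDef) {t : ℝ} (ht : t ∈ Set.Icc (0 : ℝ) 1) : ((1 - t) • A + t • B).PosDef := by
  obtain ⟨ht0, ht1⟩ := ht
  rcases ht0.eq_or_lt with rfl | ht0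
  · simpa using hA
  · exact PosDef.posSemidef_add (hA.posSemidef.smul (sub_nonneg.mpr ht1)) (hB.smul ht0)

section

variable {m R : Type*} [Fintype m] [DecidableEq m]

theorem mul_inv_transpose_mul_self_eq_one [CommRing R] {A S : Matrix m m R} (hSt : Sᵀ = S)
    (hS : IsUnit S.det) (hSA : S * S = Aᵀ * A) : (A * S⁻¹)ᵀ * (A * S⁻¹) = 1 := by
  calc (A * S⁻¹)ᵀ * (A * S⁻¹) = S⁻¹ * (Aᵀ * A) * S⁻¹ := by
        rw [transpose_mul, transpose_nonsing_inv, hSt, Matrix.mul_assoc, Matrix.mul_assoc,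
          Matrix.mul_assoc]
    _ = 1 := by
        rw [← hSA, ← Matrix.mul_assoc, nonsing_inv_mul _ hS, Matrix.one_mul, mul_nonsing_inv _ hS]

theorem posDef_transpose_mul_self {A : Matrix m m ℝ} (hA : IsUnit A.det) : (Aᵀ * A).PosDef := by
  simpa [conjTranspose_eq_transpose_of_trivial] using
    PosDef.conjTranspose_mul_self A (mulVec_injective_of_isUnit ((isUnit_iff_isUnit_det A).mpr hA))

theorem continuousOn_inv : ContinuousOn Inv.inv {A : Matrix m m ℝ | IsUnit A.det} :=
  fun A hA => (continuousAt_matrix_inv A (NormedRing.inverse_continuousAt hA.unit)).continuousWithinAt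

end

variable {n : ℕ}

theorem psdSqrt_eq_sqrt {P : Matrix (Fin n) (Fin n) ℝ} (hP : P.PosSemidef) :
    psdSqrt P = CFC.sqrt P := by
  rw [psdSqrt, dif_pos hP, CFC.sqrt_eq_real_sqrt P hP.nonneg, cfcₙ_eq_cfc, hP.1.cfc_eq,
    IsHermitian.cfc]
  rfl

theorem continuousOn_psdSqrt :
    ContinuousOn psdSqrt {P : Matrix (Fin n) (Fin n) ℝ | P.PosSemidef} := by
  refine ContinuousOn.congr ?_ fun P hP => psdSqrt_eq_sqrt hP
  open scoped Matrix.Norms.L2Operator in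
  simpa only [nonneg_iff_posSemidef] using
    (CFC.continuousOn_sqrt : ContinuousOn CFC.sqrt {P : Matrix (Fin n) (Fin n) ℝ | 0 ≤ P})

theorem PosSemidef.psdSqrt_mul_self {P : Matrix (Fin n) (Fin n) ℝ} (hP : P.PosSemidef) :
    psdSqrt P * psdSqrt P = P := by
  rw [psdSqrt_eq_sqrt hP]
  exact CFC.sqrt_mul_sqrt_self P hP.nonneg

theorem PosDef.psdSqrt {P : Matrix (Fin n) (Fin n) ℝ} (hP : P.PosDef) : (psdSqrt P).PosDef := by
  rw [psdSqrt_eq_sqrt hP.posSemidef]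
  exact (nonneg_iff_posSemidef.mp (CFC.sqrt_nonneg P)).posDef_iff_isUnit.mpr
    (CFC.isUnit_sqrt_iff_isStrictlyPositive.mpr hP.isStrictlyPositive)

theorem psdSqrt_one : psdSqrt (1 : Matrix (Fin n) (Fin n) ℝ) = 1 := by
  rw [psdSqrt_eq_sqrt PosSemidef.one, CFC.sqrt_one]

theorem continuousOn_inv_psdSqrt_transpose_mul_self :
    ContinuousOn (fun A : Matrix (Fin n) (Fin n) ℝ => (psdSqrt (Aᵀ * A))⁻¹) {A | IsUnit A.det} :=
  continuousOn_inv.comp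
    (continuousOn_psdSqrt.comp (by fun_prop) fun _ hA => (posDef_transpose_mul_self hA).posSemidef)
    fun _ hA => (isUnit_iff_isUnit_det _).mp (posDef_transpose_mul_self hA).psdSqrt.isUnit

end Matrix

/-- The map H(A,t) = (1−t)A + t·A(√(AᵀA))⁻¹ is a strong deformation retraction of
GL(n,ℝ) onto O(n,ℝ): H(A,t) is invertible for A ∈ GL(n,ℝ) and t ∈ [0,1], H is continuous on
GL(n,ℝ) × [0,1], H(A,0) = A, H(A,1) = A(√(AᵀA))⁻¹ ∈ O(n,ℝ), and H(B,t) = B for all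
B ∈ O(n,ℝ) and t ∈ [0,1]. -/
theorem deformation_retraction_GL_onto_O {n : ℕ} :
    letI H : Matrix (Fin n) (Fin n) ℝ → ℝ → Matrix (Fin n) (Fin n) ℝ := fun A t =>
      (1 - t) • A + t • (A * (psdSqrt (Aᵀ * A))⁻¹)
    (∀ A : Matrix (Fin n) (Fin n) ℝ, IsUnit A.det →
      ∀ t ∈ Set.Icc (0 : ℝ) 1, IsUnit (H A t).det) ∧
    ContinuousOn (fun p : Matrix (Fin n) (Fin n) ℝ × ℝ => H p.1 p.2)
      ({A : Matrix (Fin n) (Fin n) ℝ | IsUnit A.det} ×ˢ Set.Icc (0 : ℝ) 1) ∧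
    (∀ A : Matrix (Fin n) (Fin n) ℝ, H A 0 = A) ∧
    (∀ A : Matrix (Fin n) (Fin n) ℝ, IsUnit A.det →
      H A 1 = A * (psdSqrt (Aᵀ * A))⁻¹ ∧
      (A * (psdSqrt (Aᵀ * A))⁻¹)ᵀ * (A * (psdSqrt (Aᵀ * A))⁻¹) = 1) ∧
    (∀ B : Matrix (Fin n) (Fin n) ℝ, Bᵀ * B = 1 → ∀ t ∈ Set.Icc (0 : ℝ) 1, H B t = B) := by
  have hS (A : Matrix (Fin n) (Fin n) ℝ) (hA : IsUnit A.det) : (psdSqrt (Aᵀ * A)).PosDef :=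
    (posDef_transpose_mul_self hA).psdSqrt
  dsimp only
  refine ⟨fun A hA t ht => ?_, ?_, fun A => by simp, fun A hA => ⟨by simp, ?_⟩,
    fun B hB t _ => ?_⟩
  · have hH : (1 - t) • A + t • (A * (psdSqrt (Aᵀ * A))⁻¹)
        = A * ((1 - t) • 1 + t • (psdSqrt (Aᵀ * A))⁻¹) := by
      rw [mul_add, mul_smul_comm, mul_smul_comm, mul_one]
    rw [hH, det_mul]
    exact hA.mul (PosDef.one.one_sub_smul_add_smul (hS A hA).inv ht).det_pos.ne'.isUnit
  · exact (by fun_prop : Continuous fun p : Matrix (Fin n) (Fin n) ℝ × ℝ => (1 - p.2) • p.1)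
      |>.continuousOn.add <| continuous_snd.continuousOn.smul <| continuous_fst.continuousOn.mul <|
        continuousOn_inv_psdSqrt_transpose_mul_self.comp continuous_fst.continuousOn
          Set.mapsTo_fst_prod
  · exact mul_inv_transpose_mul_self_eq_one (hS A hA).isHermitian
      ((isUnit_iff_isUnit_det _).mp (hS A hA).isUnit)
      (posDef_transpose_mul_self hA).posSemidef.psdSqrt_mul_self
  · rw [hB, psdSqrt_one, inv_one, mul_one, ← add_smul, sub_add_cancel, one_smul]
end
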